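/- arXiv:2310.03692 — 3 statements merged into one kernel-verified Lean document; each statement's English description precedes it below -/
import Mathlib

section
/- In the market with linear valuations, if p and q are both feasible price vectors, then their elementwise minimum p ∧ q is also feasible. -/
open Finset

variable {n m : ℕ}

def dotp {n : ℕ} (p x : Fin n → ℝ) : ℝ := ∑ j, p j * x j

def Demand {n : ℕ} (v : Fin n → ℝ) (β : ℝ) (p : Fin n → ℝ) : Set (Fin n → ℝ) :=
  {x | (∀ j, 0 ≤ x j) ∧ dotp p x ≤ β ∧
    ∀ y : Fin n → ℝ, (∀ j, 0 ≤ y j) → dotp p y ≤ β →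
      dotp v y - dotp p y ≤ dotp v x - dotp p x}

lemma dotp_adjust (a x : Fin n → ℝ) (j : Fin n) (c : ℝ) :
    dotp a (fun l => x l + if l = j then c else 0) = dotp a x + a j * c := by
  unfold dotp
  simp [mul_add, Finset.sum_add_distrib, mul_ite, Finset.sum_ite_eq']

lemma dotp_adjust2 (a x : Fin n → ℝ) (j k : Fin n) (c d : ℝ) :
    dotp a (fun l => x l + ((if l = j then c else 0) + (if l = k then d else 0)))
      = dotp a x + a j * c + a k * d := by
  unfold dotp
  simp [mul_add, Finset.sum_add_distrib, mul_ite, Finset.sum_ite_eq']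
  ring

/-- utility of a demanded bundle is nonnegative -/
lemma util_nonneg {v β p x} (hβ : 0 ≤ β) (hx : x ∈ Demand (n := n) v β p) :
    0 ≤ dotp v x - dotp p x := by
  have h := hx.2.2 (fun _ => 0) (fun _ => le_refl 0) (by simpa [dotp] using hβ)
  simpa [dotp] using h

/-- single-good lower bound on achieved utility -/
lemma util_single {v β p x} (hβ : 0 ≤ β) (hp : ∀ j, 0 < p j)
    (hx : x ∈ Demand (n := n) v β p) (k : Fin n) :
    β * (v k - p k) ≤ (dotp v x - dotp p x) * p k := by
  have hpk := hp k
  have hq' : dotp p (fun l => if l = k then β / p k else 0) = β := by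
    unfold dotp; simp [mul_ite, Finset.sum_ite_eq', mul_div_cancel₀ _ hpk.ne']
  have h := hx.2.2 (fun l => if l = k then β / p k else 0)
    (fun l => by positivity) (le_of_eq hq')
  have hv' : dotp v (fun l => if l = k then β / p k else 0) = v k * (β / p k) := by
    unfold dotp; simp [mul_ite, Finset.sum_ite_eq']
  rw [hv', hq'] at h
  have h2 := mul_le_mul_of_nonneg_right h hpk.le
  have h3 : v k * (β / p k) * p k = v k * β := by field_simp
  nlinarith [h3]

/-- exchange bounds at an actively consumed good -/
lemma util_active {v β p x} (hβ : 0 ≤ β) (hp : ∀ j, 0 < p j)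
    (hx : x ∈ Demand (n := n) v β p) {j : Fin n} (hj : 0 < x j) :
    p j ≤ v j ∧ (dotp v x - dotp p x) * p j ≤ β * (v j - p j) := by
  obtain ⟨hx0, hbud, hopt⟩ := hx
  -- drop good j entirely
  have hdrop : p j ≤ v j := by
    have h := hopt (fun l => x l + if l = j then -(x j) else 0)
      (fun l => by by_cases hl : l = j <;> simp [hl, hx0 l])
      (by
        rw [dotp_adjust]
        nlinarith [mul_nonneg (hp j).le (hx0 j)])
    rw [dotp_adjust, dotp_adjust] at h
    nlinarith
  -- bang-per-buck maximality: ∀ k, v k * p j ≤ v j * p k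
  have hbpb : ∀ k, v k * p j ≤ v j * p k := by
    intro k
    by_cases hk : k = j
    · subst hk; rw [mul_comm]
    · have hjk : j ≠ k := fun h => hk h.symm
      set d : ℝ := x j * p j / p k with hd
      have hdnn : 0 ≤ d := div_nonneg (mul_nonneg (hx0 j) (hp j).le) (hp k).le
      have hdpk : d * p k = x j * p j := div_mul_cancel₀ _ (hp k).ne'
      have h := hopt
        (fun l => x l + ((if l = j then -(x j) else 0) + (if l = k then d else 0)))
        (fun l => by
          by_cases hl : l = j
          · subst hl; simp [hjk]
          · by_cases hl2 : l = k
            · subst hl2; simpa [hl] using add_nonneg (hx0 l) hdnn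
            · simpa [hl, hl2] using hx0 l)
        (by
          rw [dotp_adjust2]
          have : p k * d = x j * p j := by rw [mul_comm]; exact hdpk
          nlinarith)
      rw [dotp_adjust2, dotp_adjust2] at h
      have h2 : v k * d ≤ v j * x j := by nlinarith
      have h3 := mul_le_mul_of_nonneg_right h2 (hp k).le
      rw [mul_assoc, hdpk] at h3
      have h4 : x j * (v k * p j) ≤ x j * (v j * p k) := by nlinarith
      exact le_of_mul_le_mul_left h4 hj
  refine ⟨hdrop, ?_⟩
  have hsum : (dotp v x - dotp p x) * p j = ∑ k, (v k - p k) * x k * p j := by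
    unfold dotp
    rw [← Finset.sum_sub_distrib, Finset.sum_mul]
    exact Finset.sum_congr rfl fun k _ => by ring
  rw [hsum]
  calc ∑ k, (v k - p k) * x k * p j ≤ ∑ k, (v j - p j) * (p k * x k) := by
        refine Finset.sum_le_sum fun k _ => ?_
        have := hbpb k
        nlinarith [hx0 k, hp k, hp j]
    _ = (v j - p j) * dotp p x := by rw [dotp, Finset.mul_sum]
    _ ≤ β * (v j - p j) := by nlinarith

/-- sufficient condition for demand membership -/
lemma mem_demand_of_bounds {v r x : Fin n → ℝ} {β : ℝ} (hβ : 0 < β)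
    (hx0 : ∀ j, 0 ≤ x j) (hbud : dotp r x ≤ β)
    (hu : 0 ≤ dotp v x - dotp r x)
    (hb : ∀ k, β * (v k - r k) ≤ (dotp v x - dotp r x) * r k) :
    x ∈ Demand v β r := by
  refine ⟨hx0, hbud, fun y hy hby => ?_⟩
  set u := dotp v x - dotp r x with hudef
  have key : β * (dotp v y - dotp r y) ≤ β * u := by
    have h1 : β * (dotp v y - dotp r y) = ∑ k, β * (v k - r k) * y k := by
      unfold dotp
      rw [← Finset.sum_sub_distrib, Finset.mul_sum]
      exact Finset.sum_congr rfl fun k _ => by ring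
    have h2 : u * dotp r y = ∑ k, u * r k * y k := by
      unfold dotp; rw [Finset.mul_sum]
      exact Finset.sum_congr rfl fun k _ => by ring
    rw [h1]
    calc ∑ k, β * (v k - r k) * y k ≤ ∑ k, u * r k * y k :=
          Finset.sum_le_sum fun k _ => mul_le_mul_of_nonneg_right (hb k) (hy k)
      _ = u * dotp r y := h2.symm
      _ ≤ u * β := mul_le_mul_of_nonneg_left hby hu
      _ = β * u := mul_comm _ _
  exact le_of_mul_le_mul_left key hβ

/-- Strictly positive prices are feasible if some allocation of demanded
bundles does not exceed the supply. -/
def FeasiblePrices (s : Fin n → ℝ) (v : Fin m → Fin n → ℝ) (β : Fin m → ℝ)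
    (p : Fin n → ℝ) : Prop :=
  (∀ j, 0 < p j) ∧ ∃ x : Fin m → Fin n → ℝ,
    (∀ i, x i ∈ Demand (v i) (β i) p) ∧ ∀ j, ∑ i, x i j ≤ s j

/-- If `p` and `q` are feasible prices, so is their elementwise minimum. -/
theorem feasible_min (s : Fin n → ℝ) (v : Fin m → Fin n → ℝ) (β : Fin m → ℝ)
    (hv : ∀ i j, 0 ≤ v i j) (hgood : ∀ j, ∃ i, 0 < v i j)
    (hβ : ∀ i, 0 < β i) (hs : ∀ j, 0 ≤ s j)
    (p q : Fin n → ℝ)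
    (hp : FeasiblePrices s v β p) (hq : FeasiblePrices s v β q) :
    FeasiblePrices s v β (fun j => min (p j) (q j)) := by
  classical
  obtain ⟨hpp, x, hxD, hxs⟩ := hp
  obtain ⟨hqp, y, hyD, hys⟩ := hq
  set r : Fin n → ℝ := fun j => min (p j) (q j) with hr
  have hrp : ∀ j, 0 < r j := fun j => lt_min (hpp j) (hqp j)
  set C : Fin m → Prop := fun i =>
    dotp (v i) (y i) - dotp q (y i) ≤ dotp (v i) (x i) - dotp p (x i) with hC
  -- buyers choosing x consume nothing where q < p
  have hsupx : ∀ i, C i → ∀ j, q j < p j → x i j = 0 := by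
    intro i hle j hqj
    have hle' : dotp (v i) (y i) - dotp q (y i)
        ≤ dotp (v i) (x i) - dotp p (x i) := hle
    by_contra h0
    have hxj : 0 < x i j := lt_of_le_of_ne ((hxD i).1 j) (Ne.symm h0)
    obtain ⟨hvp, hup⟩ := util_active (hβ i).le hpp (hxD i) hxj
    have hq1 := util_single (hβ i).le hqp (hyD i) j
    have A := mul_le_mul_of_nonneg_right hup (hqp j).le
    have B0 := mul_le_mul_of_nonneg_right hle' (hqp j).le
    have B := mul_le_mul_of_nonneg_right (le_trans hq1 B0) (hpp j).le
    nlinarith [mul_pos (hβ i) (mul_pos (lt_of_lt_of_le (hpp j) hvp)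
      (sub_pos.2 hqj))]
  -- buyers choosing y consume nothing where p ≤ q
  have hsupy : ∀ i, ¬ C i → ∀ j, p j ≤ q j → y i j = 0 := by
    intro i hlt j hpj
    have hlt' : dotp (v i) (x i) - dotp p (x i)
        < dotp (v i) (y i) - dotp q (y i) := lt_of_not_ge hlt
    by_contra h0
    have hyj : 0 < y i j := lt_of_le_of_ne ((hyD i).1 j) (Ne.symm h0)
    obtain ⟨hvq, huq⟩ := util_active (hβ i).le hqp (hyD i) hyj
    have hp1 := util_single (hβ i).le hpp (hxD i) j
    have A := mul_le_mul_of_nonneg_right huq (hpp j).le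
    have B0 := mul_lt_mul_of_pos_right hlt' (hpp j)
    have B := mul_lt_mul_of_pos_right (lt_of_le_of_lt hp1 B0) (hqp j)
    nlinarith [mul_nonneg (mul_nonneg (hβ i).le (le_trans (hqp j).le hvq))
      (sub_nonneg.2 hpj)]
  refine ⟨hrp, fun i => if C i then x i else y i, fun i => ?_, fun j => ?_⟩
  · rcases le_or_gt (dotp (v i) (y i) - dotp q (y i))
      (dotp (v i) (x i) - dotp p (x i)) with hc | hlt
    · show (if C i then x i else y i) ∈ Demand (v i) (β i) r
      rw [if_pos (show C i from hc)]
      have hrx : dotp r (x i) = dotp p (x i) := by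
        unfold dotp
        refine Finset.sum_congr rfl fun j _ => ?_
        rcases le_or_gt (p j) (q j) with h | h
        · have : r j = p j := min_eq_left h
          rw [this]
        · rw [hsupx i hc j h, mul_zero, mul_zero]
      refine mem_demand_of_bounds (hβ i) (hxD i).1 (hrx ▸ (hxD i).2.1)
        (hrx ▸ util_nonneg (hβ i).le (hxD i)) fun k => ?_
      rw [hrx]
      rcases le_or_gt (p k) (q k) with h | h
      · have hrk : r k = p k := min_eq_left h
        rw [hrk]; exact util_single (hβ i).le hpp (hxD i) k
      · have hrk : r k = q k := min_eq_right h.le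
        rw [hrk]
        have h1 := util_single (hβ i).le hqp (hyD i) k
        have h2 := mul_le_mul_of_nonneg_right hc (hqp k).le
        linarith
    · have hc : ¬ C i := not_le.2 hlt
      show (if C i then x i else y i) ∈ Demand (v i) (β i) r
      rw [if_neg hc]
      have hry : dotp r (y i) = dotp q (y i) := by
        unfold dotp
        refine Finset.sum_congr rfl fun j _ => ?_
        rcases le_or_gt (p j) (q j) with h | h
        · rw [hsupy i hc j h, mul_zero, mul_zero]
        · have : r j = q j := min_eq_right h.le
          rw [this]
      refine mem_demand_of_bounds (hβ i) (hyD i).1 (hry ▸ (hyD i).2.1)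
        (hry ▸ util_nonneg (hβ i).le (hyD i)) fun k => ?_
      rw [hry]
      rcases le_or_gt (p k) (q k) with h | h
      · have hrk : r k = p k := min_eq_left h
        rw [hrk]
        have h1 := util_single (hβ i).le hpp (hxD i) k
        have h2 := mul_le_mul_of_nonneg_right hlt.le (hpp k).le
        linarith
      · have hrk : r k = q k := min_eq_right h.le
        rw [hrk]; exact util_single (hβ i).le hqp (hyD i) k
  · rcases le_or_gt (p j) (q j) with h | h
    · calc ∑ i, (if C i then x i else y i) j ≤ ∑ i, x i j := by
            refine Finset.sum_le_sum fun i _ => ?_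
            by_cases hc : C i
            · simp [hc]
            · simp [hc, hsupy i hc j h, (hxD i).1 j]
        _ ≤ s j := hxs j
    · calc ∑ i, (if C i then x i else y i) j ≤ ∑ i, y i j := by
            refine Finset.sum_le_sum fun i _ => ?_
            by_cases hc : C i
            · simp [hc, hsupx i hc j h, (hyD i).1 j]
            · simp [hc]
        _ ≤ s j := hys j
end

section
/- Cross-region demand lemma: let p, q be strictly positive prices, r = p ∧ q, A = {j : p_j < q_j} and B = {j : p_j ≥ q_j}. If a buyer with linear valuation demands some good j ∈ B at r, then the buyer's set of bang-per-buck maximizing goods at q satisfies J(q) ⊆ J(r) and J(q) ⊆ B ∪ {0}. -/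
open Finset

variable {n : ℕ}

/-- Bang-per-buck ratio; `none` denotes the money good with value and price 1. -/
noncomputable def ratio (v p : Fin n → ℝ) : Option (Fin n) → ℝ
  | none => 1
  | some j => v j / p j

/-- Cross-region demand lemma: if a buyer bang-per-buck maximises a good `j`
with `q j ≤ p j` at the elementwise minimum `r = p ⊓ q`, then every
bang-per-buck maximiser at `q` is a maximiser at `r`, and every non-money
maximiser `k` at `q` satisfies `q k ≤ p k`. -/
theorem cross_region_demand (v p q : Fin n → ℝ)
    (hv : ∀ j, 0 ≤ v j) (hp : ∀ j, 0 < p j) (hq : ∀ j, 0 < q j)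
    (r : Fin n → ℝ) (hr : r = fun j => min (p j) (q j))
    (j : Fin n) (hB : q j ≤ p j)
    (hj : ∀ k : Option (Fin n), ratio v r k ≤ ratio v r (some j)) :
    (∀ k : Option (Fin n), (∀ l, ratio v q l ≤ ratio v q k) →
      ∀ l, ratio v r l ≤ ratio v r k) ∧
    (∀ k : Fin n, (∀ l, ratio v q l ≤ ratio v q (some k)) → q k ≤ p k) := by
  have hrpos : ∀ l, 0 < r l := by
    intro l; rw [hr]; exact lt_min (hp l) (hq l)
  have hrq : ∀ l, r l ≤ q l := by
    intro l; rw [hr]; exact min_le_right _ _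
  have key : ∀ k : Option (Fin n), ratio v q k ≤ ratio v r k := by
    intro k
    cases k with
    | none => simp [ratio]
    | some l =>
      simp only [ratio]
      gcongr
      · exact hv l
      · exact hrpos l
      · exact hrq l
  have hrj : r j = q j := by rw [hr]; simp [min_eq_right hB]
  have hjr : ratio v r (some j) = ratio v q (some j) := by simp [ratio, hrj]
  constructor
  · intro k hk l
    calc ratio v r l ≤ ratio v r (some j) := hj l
      _ = ratio v q (some j) := hjr
      _ ≤ ratio v q k := hk _
      _ ≤ ratio v r k := key k
  · intro k hk
    by_contra h
    push_neg at h
    have hrk : r k = p k := by rw [hr]; simp [min_eq_left h.le]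
    have hvk : 0 < v k := by
      have h1 := hk none
      simp only [ratio] at h1
      by_contra hv0
      push_neg at hv0
      have : v k = 0 := le_antisymm hv0 (hv k)
      rw [this] at h1
      simp at h1
      linarith [(hq k), h1]
    have h2 : ratio v r (some k) ≤ ratio v q (some k) := by
      calc ratio v r (some k) ≤ ratio v r (some j) := hj _
        _ = ratio v q (some j) := hjr
        _ ≤ ratio v q (some k) := hk _
    simp only [ratio, hrk] at h2
    have : v k / q k < v k / p k := by
      apply div_lt_div_of_pos_left hvk (hp k) h
    linarith
end

section
/- In the linear-valuation market, any competitive equilibrium outcome maximizes revenue: its revenue ∑_j p*_j s_j (adjusted for zero-priced goods) is at least the revenue ∑_i q·y^i of every feasible outcome (q,(y^i)). -/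
open Finset

variable {n m : ℕ}

def Alloc (s : Fin n → ℝ) (v : Fin m → Fin n → ℝ) (β : Fin m → ℝ)
    (p : Fin n → ℝ) (x : Fin m → Fin n → ℝ) : Prop :=
  (∀ i, x i ∈ Demand (v i) (β i) p) ∧ ∀ j, ∑ i, x i j ≤ s j


lemma dotp_update (p z : Fin n → ℝ) (j : Fin n) (c : ℝ) :
    dotp p (Function.update z j c) = dotp p z + p j * (c - z j) := by
  unfold dotp
  have h1 : ∑ k, p k * Function.update z j c k
      = ∑ k, Function.update (fun k => p k * z k) j (p j * c) k :=
    Finset.sum_congr rfl (fun k _ => by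
      rcases eq_or_ne k j with h | h
      · subst h; simp
      · simp [Function.update_of_ne h])
  rw [h1, Finset.sum_update_of_mem (Finset.mem_univ j),
    Finset.sum_eq_add_sum_sdiff_singleton_of_mem (Finset.mem_univ j) (fun k => p k * z k)]
  ring

lemma Demand.support_val {v r z : Fin n → ℝ} {β : ℝ} (hr : ∀ j, 0 < r j)
    (hz : z ∈ Demand v β r) {j : Fin n} (hj : 0 < z j) : r j ≤ v j := by
  obtain ⟨hz0, hzb, hopt⟩ := hz
  by_contra hlt
  push_neg at hlt
  have h0 : ∀ k, 0 ≤ Function.update z j 0 k := by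
    intro k
    rcases eq_or_ne k j with h | h
    · subst h; simp
    · simp [Function.update_of_ne h, hz0 k]
  have hb : dotp r (Function.update z j 0) ≤ β := by
    rw [dotp_update]
    nlinarith [mul_nonneg (hr j).le (hz0 j)]
  have hcmp := hopt _ h0 hb
  rw [dotp_update, dotp_update] at hcmp
  nlinarith [mul_pos (sub_pos.mpr hlt) hj]

lemma Demand.ratio {v r z : Fin n → ℝ} {β : ℝ} (hr : ∀ j, 0 < r j)
    (hz : z ∈ Demand v β r) {j : Fin n} (hj : 0 < z j) (k : Fin n) :
    v k * r j ≤ v j * r k := by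
  rcases eq_or_ne k j with h | hkj
  · subst h; exact le_refl _
  obtain ⟨hz0, hzb, hopt⟩ := hz
  have hjk : j ≠ k := fun h => hkj h.symm
  set c : ℝ := z k + r j * z j / r k with hc
  set z' := Function.update (Function.update z j 0) k c with hz'
  have h0 : ∀ l, 0 ≤ z' l := by
    intro l
    by_cases h : l = k
    · rw [hz', h, Function.update_self]
      have h2 : 0 ≤ r j * z j / r k := div_nonneg (mul_nonneg (hr j).le (hz0 j)) (hr k).le
      rw [hc]; linarith [hz0 k]
    · rw [hz', Function.update_of_ne h]
      by_cases h2 : l = j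
      · rw [h2, Function.update_self]
      · rw [Function.update_of_ne h2]; exact hz0 l
  have hupdk : Function.update z j 0 k = z k := Function.update_of_ne hkj _ _
  have hrk := hr k
  have hb : dotp r z' = dotp r z := by
    rw [hz', dotp_update, dotp_update, hupdk, hc]
    field_simp
    ring
  have hopt' := hopt z' h0 (by rw [hb]; exact hzb)
  have hvz : dotp v z' = dotp v z - v j * z j + v k * (r j * z j / r k) := by
    rw [hz', dotp_update, dotp_update, hupdk, hc]; ring
  rw [hvz, hb] at hopt'
  have h2 : v k * (r j * z j / r k) ≤ v j * z j := by linarith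
  have hcancel : r j * z j / r k * r k = r j * z j := div_mul_cancel₀ _ hrk.ne'
  have h5 := mul_le_mul_of_nonneg_right h2 hrk.le
  rw [mul_assoc, hcancel] at h5
  have h6 : v k * r j * z j ≤ v j * r k * z j := by nlinarith [h5]
  exact le_of_mul_le_mul_right h6 hj

lemma Demand.exhaust {v r z : Fin n → ℝ} {β : ℝ} (hr : ∀ j, 0 < r j)
    (hz : z ∈ Demand v β r) {k : Fin n} (hk : r k < v k) : dotp r z = β := by
  obtain ⟨hz0, hzb, hopt⟩ := hz
  by_contra hne
  have hlt : dotp r z < β := lt_of_le_of_ne hzb hne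
  set δ := (β - dotp r z) / r k with hδ
  have hδpos : 0 < δ := div_pos (by linarith) (hr k)
  have hrδ : r k * δ = β - dotp r z := by
    rw [hδ, mul_comm]; exact div_mul_cancel₀ _ (hr k).ne'
  have h0 : ∀ l, 0 ≤ Function.update z k (z k + δ) l := by
    intro l
    by_cases h : l = k
    · rw [h, Function.update_self]; linarith [hz0 k]
    · rw [Function.update_of_ne h]; exact hz0 l
  have hb : dotp r (Function.update z k (z k + δ)) ≤ β := by
    rw [dotp_update]
    nlinarith
  have hcmp := hopt _ h0 hb
  rw [dotp_update, dotp_update] at hcmp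
  nlinarith [mul_pos (sub_pos.mpr hk) hδpos]

lemma price_minimal
    (s : Fin n → ℝ) (v : Fin m → Fin n → ℝ) (β : Fin m → ℝ) (hs : ∀ j, 0 ≤ s j)
    (p q : Fin n → ℝ) (x y : Fin m → Fin n → ℝ)
    (hppos : ∀ j, 0 < p j) (hqpos : ∀ j, 0 < q j)
    (hxd : ∀ i, x i ∈ Demand (v i) (β i) p)
    (hyd : ∀ i, y i ∈ Demand (v i) (β i) q)
    (hclear : ∀ j, ∑ i, x i j = s j)
    (hys : ∀ j, ∑ i, y i j ≤ s j) :
    ∀ j, 0 < s j → p j ≤ q j := by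
  classical
  by_contra hcon
  push_neg at hcon
  obtain ⟨j0, hs0, hqp0⟩ := hcon
  set S : Finset (Fin n) := univ.filter (fun j => q j < p j) with hS
  have hj0S : j0 ∈ S := by simp [hS, hqp0]
  set D : Finset (Fin m) := univ.filter (fun i => ∃ j ∈ S, 0 < x i j) with hD
  have hx0 : ∀ i j, 0 ≤ x i j := fun i j => (hxd i).1 j
  have hy0 : ∀ i j, 0 ≤ y i j := fun i j => (hyd i).1 j
  -- members of D exhaust their budget at q
  have c1 : ∀ i ∈ D, dotp q (y i) = β i := by
    intro i hiD
    rw [hD, mem_filter] at hiD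
    obtain ⟨-, j, hjS, hxij⟩ := hiD
    rw [hS, mem_filter] at hjS
    have hvij : p j ≤ v i j := Demand.support_val hppos (hxd i) hxij
    exact Demand.exhaust hqpos (hyd i) (lt_of_lt_of_le hjS.2 hvij)
  -- members of D buy only S-goods at q
  have c2 : ∀ i ∈ D, ∀ k, k ∉ S → y i k = 0 := by
    intro i hiD k hkS
    rw [hD, mem_filter] at hiD
    obtain ⟨-, j, hjS, hxij⟩ := hiD
    rw [hS, mem_filter] at hjS
    have hqpj : q j < p j := hjS.2
    have hpk : p k ≤ q k := by
      by_contra h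
      exact hkS (by simp [hS]; linarith)
    by_contra hykne
    have hyk : 0 < y i k := lt_of_le_of_ne (hy0 i k) (Ne.symm hykne)
    have hvij : p j ≤ v i j := Demand.support_val hppos (hxd i) hxij
    have hvik : q k ≤ v i k := Demand.support_val hqpos (hyd i) hyk
    have hr1 : v i j * q k ≤ v i k * q j := Demand.ratio hqpos (hyd i) hyk j
    have hr2 : v i k * p j ≤ v i j * p k := Demand.ratio hppos (hxd i) hxij k
    have ha : 0 < v i j := lt_of_lt_of_le (hppos j) hvij
    have hb : 0 < v i k := lt_of_lt_of_le (hqpos k) hvik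
    have h5 : (v i j * q k) * (v i k * p j) ≤ (v i k * q j) * (v i j * p k) :=
      mul_le_mul hr1 hr2 (mul_nonneg hb.le (hppos j).le) (mul_nonneg hb.le (hqpos j).le)
    have h6 : (v i j * v i k) * (q k * p j) ≤ (v i j * v i k) * (q j * p k) := by nlinarith [h5]
    have key : q k * p j ≤ q j * p k := le_of_mul_le_mul_left h6 (mul_pos ha hb)
    nlinarith [mul_lt_mul_of_pos_right hqpj (hppos k),
      mul_le_mul_of_nonneg_left hpk (hppos j).le]
  -- the chain
  have hchain : ∑ j ∈ S, p j * s j ≤ ∑ j ∈ S, q j * s j := by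
    calc ∑ j ∈ S, p j * s j
        = ∑ j ∈ S, ∑ i, p j * x i j := by
          refine Finset.sum_congr rfl (fun j _ => ?_)
          rw [← hclear j, Finset.mul_sum]
      _ = ∑ i, ∑ j ∈ S, p j * x i j := Finset.sum_comm
      _ = ∑ i ∈ D, ∑ j ∈ S, p j * x i j := by
          refine (Finset.sum_subset (Finset.subset_univ D) (fun i _ hiD => ?_)).symm
          refine Finset.sum_eq_zero (fun j hjS => ?_)
          rw [hD, mem_filter] at hiD
          push_neg at hiD
          have : x i j = 0 := le_antisymm (hiD (mem_univ i) j hjS) (hx0 i j)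
          rw [this, mul_zero]
      _ ≤ ∑ i ∈ D, dotp p (x i) := by
          refine Finset.sum_le_sum (fun i _ => ?_)
          exact Finset.sum_le_sum_of_subset_of_nonneg (Finset.subset_univ S)
            (fun j _ _ => mul_nonneg (hppos j).le (hx0 i j))
      _ ≤ ∑ i ∈ D, β i := Finset.sum_le_sum (fun i _ => (hxd i).2.1)
      _ = ∑ i ∈ D, dotp q (y i) := Finset.sum_congr rfl (fun i hi => (c1 i hi).symm)
      _ = ∑ i ∈ D, ∑ j ∈ S, q j * y i j := by
          refine Finset.sum_congr rfl (fun i hi => ?_)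
          refine (Finset.sum_subset (Finset.subset_univ S) (fun k _ hkS => ?_)).symm
          rw [c2 i hi k hkS, mul_zero]
      _ ≤ ∑ i, ∑ j ∈ S, q j * y i j := by
          refine Finset.sum_le_sum_of_subset_of_nonneg (Finset.subset_univ D)
            (fun i _ _ => Finset.sum_nonneg (fun j _ => mul_nonneg (hqpos j).le (hy0 i j)))
      _ = ∑ j ∈ S, q j * (∑ i, y i j) := by
          rw [Finset.sum_comm]
          exact Finset.sum_congr rfl (fun j _ => (Finset.mul_sum _ _ _).symm)
      _ ≤ ∑ j ∈ S, q j * s j :=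
          Finset.sum_le_sum (fun j _ => mul_le_mul_of_nonneg_left (hys j) (hqpos j).le)
  have hstrict : ∑ j ∈ S, q j * s j < ∑ j ∈ S, p j * s j := by
    refine Finset.sum_lt_sum (fun j hjS => ?_) ⟨j0, hj0S, ?_⟩
    · rw [hS, mem_filter] at hjS
      exact mul_le_mul_of_nonneg_right hjS.2.le (hs j)
    · exact mul_lt_mul_of_pos_right hqp0 hs0
  linarith


/-- In the linear-valuation market, any competitive equilibrium outcome
maximises revenue: its revenue is at least that of every feasible outcome. -/
theorem equilibrium_maximises_revenue
    (s : Fin n → ℝ) (v : Fin m → Fin n → ℝ) (β : Fin m → ℝ)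
    (hv : ∀ i j, 0 ≤ v i j) (hgood : ∀ j, ∃ i, 0 < v i j)
    (hβ : ∀ i, 0 < β i) (hs : ∀ j, 0 ≤ s j)
    (p : Fin n → ℝ) (x : Fin m → Fin n → ℝ)
    (hppos : ∀ j, 0 < p j) (hx : Alloc s v β p x)
    (hclear : ∀ j, 0 < p j → ∑ i, x i j = s j) :
    ∀ (q : Fin n → ℝ) (y : Fin m → Fin n → ℝ),
      (∀ j, 0 < q j) → Alloc s v β q y →
      ∑ i, dotp q (y i) ≤ ∑ i, dotp p (x i) := by
  intro q y hqpos hy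
  classical
  obtain ⟨hxd, hxs⟩ := hx
  obtain ⟨hyd, hys⟩ := hy
  have hx0 : ∀ i j, 0 ≤ x i j := fun i j => (hxd i).1 j
  have hy0 : ∀ i j, 0 ≤ y i j := fun i j => (hyd i).1 j
  have hclear' : ∀ j, ∑ i, x i j = s j := fun j => hclear j (hppos j)
  have hyle : ∀ i j, y i j ≤ s j := fun i j =>
    le_trans (Finset.single_le_sum (fun i' _ => hy0 i' j) (mem_univ i)) (hys j)
  have hmin : ∀ j, 0 < s j → p j ≤ q j :=
    price_minimal s v β hs p q x y hppos hqpos hxd hyd hclear' hys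
  set P : Fin m → Prop := fun i => ∃ j, p j < v i j with hP
  set A : Finset (Fin m) := univ.filter P with hA
  set Ac : Finset (Fin m) := univ.filter (fun i => ¬ P i) with hAc
  set K : Finset (Fin n) := univ.filter (fun j => 0 < s j ∧ q j = p j) with hK
  -- A-buyers exhaust budget at p
  have hAx : ∀ i ∈ A, dotp p (x i) = β i := by
    intro i hi
    rw [hA, mem_filter] at hi
    obtain ⟨-, j, hj⟩ := hi
    exact Demand.exhaust hppos (hxd i) hj
  -- non-A buyers purchase at q only within K
  have hyK : ∀ i ∈ Ac, ∀ k, k ∉ K → y i k = 0 := by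
    intro i hi k hkK
    rw [hAc, mem_filter] at hi
    have hvle : ∀ j, v i j ≤ p j := by
      intro j
      by_contra h
      exact hi.2 ⟨j, lt_of_not_ge h⟩
    by_contra hne
    have hyk : 0 < y i k := lt_of_le_of_ne (hy0 i k) (Ne.symm hne)
    have hsk : 0 < s k := lt_of_lt_of_le hyk (hyle i k)
    have hpk : p k ≤ q k := hmin k hsk
    have hv1 : q k ≤ v i k := Demand.support_val hqpos (hyd i) hyk
    have hqk : q k = p k := le_antisymm (le_trans hv1 (hvle k)) hpk
    exact hkK (by rw [hK, mem_filter]; exact ⟨mem_univ k, hsk, hqk⟩)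
  -- key per-buyer inequality for A-buyers on K
  have hA_K : ∀ i ∈ A, (∑ j ∈ K, p j * x i j) ≤ ∑ j ∈ K, q j * y i j := by
    intro i hiA
    by_cases hex : ∃ j ∈ K, 0 < x i j
    · obtain ⟨j, hjK, hxij⟩ := hex
      rw [hK, mem_filter] at hjK
      obtain ⟨-, hsj, hqj⟩ := hjK
      obtain ⟨-, m0, hm0⟩ := mem_filter.mp (hA ▸ hiA)
      have hr := Demand.ratio hppos (hxd i) hxij m0
      have hvj : p j < v i j := by nlinarith [hppos m0, hppos j]
      have hexh : dotp q (y i) = β i :=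
        Demand.exhaust hqpos (hyd i) (k := j) (by rw [hqj]; exact hvj)
      have hsub : ∀ k, k ∉ K → y i k = 0 := by
        intro k hkK
        by_contra hne
        have hyk : 0 < y i k := lt_of_le_of_ne (hy0 i k) (Ne.symm hne)
        have hsk : 0 < s k := lt_of_lt_of_le hyk (hyle i k)
        have hpk : p k ≤ q k := hmin k hsk
        have hr1 : v i j * q k ≤ v i k * q j := Demand.ratio hqpos (hyd i) hyk j
        have hr2 : v i k * p j ≤ v i j * p k := Demand.ratio hppos (hxd i) hxij k
        have hqk : q k ≤ p k := by
          have h1 : v i j * q k ≤ v i j * p k := by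
            rw [hqj] at hr1; linarith
          exact le_of_mul_le_mul_left h1 (lt_trans (hppos j) hvj)
        exact hkK (by rw [hK, mem_filter]; exact ⟨mem_univ k, hsk, le_antisymm hqk hpk⟩)
      calc ∑ j' ∈ K, p j' * x i j'
          ≤ dotp p (x i) := Finset.sum_le_sum_of_subset_of_nonneg (Finset.subset_univ K)
            (fun j' _ _ => mul_nonneg (hppos j').le (hx0 i j'))
        _ = β i := hAx i hiA
        _ = dotp q (y i) := hexh.symm
        _ = ∑ j' ∈ K, q j' * y i j' := by
            refine (Finset.sum_subset (Finset.subset_univ K) (fun k _ hkK => ?_)).symm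
            rw [hsub k hkK, mul_zero]
    · push_neg at hex
      have h1 : ∑ j ∈ K, p j * x i j = 0 :=
        Finset.sum_eq_zero (fun j hj => by
          rw [le_antisymm (hex j hj) (hx0 i j), mul_zero])
      rw [h1]
      exact Finset.sum_nonneg (fun j _ => mul_nonneg (hqpos j).le (hy0 i j))
  -- aggregate over K
  have P3 : ∑ i, ∑ j ∈ K, q j * y i j ≤ ∑ i, ∑ j ∈ K, p j * x i j := by
    rw [Finset.sum_comm (γ := Fin m), Finset.sum_comm (γ := Fin m)]
    refine Finset.sum_le_sum (fun j hj => ?_)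
    rw [hK, mem_filter] at hj
    obtain ⟨-, hsj, hqj⟩ := hj
    calc ∑ i, q j * y i j = q j * ∑ i, y i j := (Finset.mul_sum _ _ _).symm
      _ ≤ q j * s j := mul_le_mul_of_nonneg_left (hys j) (hqpos j).le
      _ = p j * s j := by rw [hqj]
      _ = p j * ∑ i, x i j := by rw [hclear' j]
      _ = ∑ i, p j * x i j := Finset.mul_sum _ _ _
  have P1 := Finset.sum_filter_add_sum_filter_not univ P (fun i => ∑ j ∈ K, q j * y i j)
  have P2 := Finset.sum_filter_add_sum_filter_not univ P (fun i => ∑ j ∈ K, p j * x i j)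
  have P4 : ∑ i ∈ A, ∑ j ∈ K, p j * x i j ≤ ∑ i ∈ A, ∑ j ∈ K, q j * y i j :=
    Finset.sum_le_sum hA_K
  have T2' : ∑ i ∈ Ac, ∑ j ∈ K, q j * y i j ≤ ∑ i ∈ Ac, ∑ j ∈ K, p j * x i j := by
    rw [hA] at P4; rw [hAc]; linarith
  have T2 : ∑ i ∈ Ac, dotp q (y i) ≤ ∑ i ∈ Ac, dotp p (x i) := by
    calc ∑ i ∈ Ac, dotp q (y i)
        = ∑ i ∈ Ac, ∑ j ∈ K, q j * y i j := by
          refine Finset.sum_congr rfl (fun i hi => ?_)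
          refine (Finset.sum_subset (Finset.subset_univ K) (fun k _ hkK => ?_)).symm
          rw [hyK i hi k hkK, mul_zero]
      _ ≤ ∑ i ∈ Ac, ∑ j ∈ K, p j * x i j := T2'
      _ ≤ ∑ i ∈ Ac, dotp p (x i) := Finset.sum_le_sum (fun i _ =>
          Finset.sum_le_sum_of_subset_of_nonneg (Finset.subset_univ K)
            (fun j _ _ => mul_nonneg (hppos j).le (hx0 i j)))
  have T1 : ∑ i ∈ A, dotp q (y i) ≤ ∑ i ∈ A, dotp p (x i) :=
    Finset.sum_le_sum (fun i hi => le_trans (hyd i).2.1 (hAx i hi).symm.le)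
  have Q1 := Finset.sum_filter_add_sum_filter_not univ P (fun i => dotp q (y i))
  have Q2 := Finset.sum_filter_add_sum_filter_not univ P (fun i => dotp p (x i))

  linarith
end
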